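/- For any ρ-slowly-moving reward-mean sequence μ and any temporal belief D on {1,…,T}, the expected best per-round mean is close to the best average mean: E_{s∼D}[max_{a∈A} μ_{s,a}] ≤ max_{a∈A} E_{s∼D}[μ_{s,a}] + ρ·Φ(D). -/

import Mathlib

open Finset MeasureTheory ProbabilityTheory

noncomputable section

/-- A reward-mean sequence `μ` (with `μ t a` the mean reward of action `a` at time `t`)
is `ρ`-slowly-moving if consecutive mean vectors differ by at most `ρ` in sup-norm. -/
def SlowlyMoving {T K : ℕ} (μ : Fin T → Fin K → ℝ) (ρ : ℝ) : Prop :=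
  ∀ (t : Fin T) (ht : t.1 + 1 < T) (a : Fin K), |μ ⟨t.1 + 1, ht⟩ a - μ t a| ≤ ρ

/-- One-sided dispersion `Ψ_D(t) = E_{s∼D}|t-s|` of a temporal belief `D`. -/
def Psi {T : ℕ} (D : Fin T → ℝ) (t : Fin T) : ℝ :=
  ∑ s : Fin T, D s * |(t.1 : ℝ) - (s.1 : ℝ)|

/-- Max dispersion `Ψ_max(D)`: the supremum of `Ψ_D` over the smallest interval of
time steps containing the support of `D`. -/
def PsiMax {T : ℕ} (D : Fin T → ℝ) : ℝ :=
  sSup (Psi D '' {t | ∃ t₁ t₂ : Fin T, D t₁ ≠ 0 ∧ D t₂ ≠ 0 ∧ t₁ ≤ t ∧ t ≤ t₂})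

/-- Mean dispersion `Φ(D) = E_{s,t∼D}|s-t|`. -/
def PhiD {T : ℕ} (D : Fin T → ℝ) : ℝ :=
  ∑ s : Fin T, ∑ t : Fin T, D s * D t * |(s.1 : ℝ) - (t.1 : ℝ)|

/-- `W₂(D) = Σ_t D(t)²`. -/
def W2 {T : ℕ} (D : Fin T → ℝ) : ℝ := ∑ t : Fin T, (D t) ^ 2

lemma univ_ne {K : ℕ} (hK : 2 ≤ K) : (univ : Finset (Fin K)).Nonempty :=
  ⟨⟨0, by omega⟩, mem_univ _⟩

lemma erase_ne {K : ℕ} (hK : 2 ≤ K) (a : Fin K) :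
    ((univ : Finset (Fin K)).erase a).Nonempty := by
  rw [← Finset.card_pos, Finset.card_erase_of_mem (mem_univ a), Finset.card_univ,
    Fintype.card_fin]
  omega

/-- `gap_{μ,D}(a) = min_{b ≠ a} Σ_t D(t)(μ_{t,a} - μ_{t,b})`. -/
def gap {T K : ℕ} (hK : 2 ≤ K) (D : Fin T → ℝ) (μ : Fin T → Fin K → ℝ) (a : Fin K) : ℝ :=
  ((univ : Finset (Fin K)).erase a).inf' (erase_ne hK a)
    (fun b => ∑ t : Fin T, D t * (μ t a - μ t b))

/-- `D`-weighted external regret of the recommendation sequence `I` on rewards `u`: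
`max_{a} Σ_t D(t)(u_{t,a} - u_{t,I_t})`.  (Taking `u := μ` gives pseudo-regret.) -/
def extReg {T K : ℕ} (hK : 2 ≤ K) (D : Fin T → ℝ) (I : Fin T → Fin K)
    (u : Fin T → Fin K → ℝ) : ℝ :=
  (univ : Finset (Fin K)).sup' (univ_ne hK) (fun a => ∑ t : Fin T, D t * (u t a - u t (I t)))

/-- `D`-weighted swap regret: `max_{φ : A → A} Σ_t D(t)(u_{t,φ(I_t)} - u_{t,I_t})`. -/
def swapReg {T K : ℕ} (D : Fin T → ℝ) (I : Fin T → Fin K)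
    (u : Fin T → Fin K → ℝ) : ℝ :=
  (univ : Finset (Fin K → Fin K)).sup' ⟨id, mem_univ _⟩
    (fun φ => ∑ t : Fin T, D t * (u t (φ (I t)) - u t (I t)))

end

/-!
Slow movement makes each arm's mean `ρ`-Lipschitz in time, so for every round `s` and arm `a`,
`μ_{s,a} ≤ E_{t∼D} μ_{t,a} + ρ·E_{t∼D}|s - t| ≤ max_b E_{t∼D} μ_{t,b} + ρ·Ψ_D(s)`.
Averaging over `s ∼ D` turns `Ψ_D(s)` into `Φ(D)`.
-/

theorem SlowlyMoving.abs_sub_le {T K : ℕ} {μ : Fin T → Fin K → ℝ} {ρ : ℝ}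
    (hslow : SlowlyMoving μ ρ) (a : Fin K) (s t : Fin T) :
    |μ s a - μ t a| ≤ ρ * |(s : ℝ) - t| := by
  wlog hst : s ≤ t generalizing s t
  · rw [abs_sub_comm, abs_sub_comm (s : ℝ)]
    exact this t s (le_of_not_ge hst)
  let f : ℕ → ℝ := fun n => if h : n < T then μ ⟨n, h⟩ a else 0
  have hstep : ∀ {k}, (s : ℕ) ≤ k → k < t → dist (f k) (f (k + 1)) ≤ ρ := by
    intro k _ hk
    have hk0 : k < T := by omega
    have hk1 : k + 1 < T := by omega
    rw [dist_comm]
    simpa [f, hk0, hk1, Real.dist_eq] using hslow ⟨k, hk0⟩ hk1 a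
  have hsum := dist_le_Ico_sum_of_dist_le (Fin.le_def.mp hst) hstep
  have hcast : |(s : ℝ) - t| = ((t : ℕ) - (s : ℕ) : ℕ) := by
    rw [abs_sub_comm, Nat.cast_sub (Fin.le_def.mp hst), abs_of_nonneg]
    exact sub_nonneg.mpr (by exact_mod_cast hst)
  simpa [f, Real.dist_eq, hcast, mul_comm] using hsum

theorem le_sum_mul_add_mul_Psi {T : ℕ} {D f : Fin T → ℝ} {ρ : ℝ}
    (hD0 : ∀ t, 0 ≤ D t) (hD1 : ∑ t, D t = 1)
    (hf : ∀ s t, |f s - f t| ≤ ρ * |(s : ℝ) - t|) (s : Fin T) :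
    f s ≤ ∑ t, D t * f t + ρ * Psi D s :=
  calc f s = ∑ t, D t * f s := by rw [← Finset.sum_mul, hD1, one_mul]
    _ ≤ ∑ t, D t * (f t + ρ * |(s : ℝ) - t|) := by
        gcongr with t
        · exact hD0 t
        · linarith [(abs_le.mp (hf s t)).2]
    _ = ∑ t, D t * f t + ρ * Psi D s := by
        simp only [Psi, mul_add, Finset.sum_add_distrib, Finset.mul_sum, mul_left_comm]

theorem sum_mul_Psi {T : ℕ} (D : Fin T → ℝ) : ∑ s, D s * Psi D s = PhiD D := by
  simp only [Psi, PhiD, Finset.mul_sum, mul_assoc]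

theorem stmt6_general {T K : ℕ} (hK : 2 ≤ K) (ρ : ℝ)
    (μ : Fin T → Fin K → ℝ)
    (hslow : SlowlyMoving μ ρ)
    (D : Fin T → ℝ) (hD0 : ∀ t, 0 ≤ D t) (hD1 : ∑ t, D t = 1) :
    ∑ s : Fin T, D s * ((univ : Finset (Fin K)).sup' (univ_ne hK) (fun a => μ s a))
      ≤ (univ : Finset (Fin K)).sup' (univ_ne hK) (fun a => ∑ s : Fin T, D s * μ s a)
        + ρ * PhiD D := by
  set M := (univ : Finset (Fin K)).sup' (univ_ne hK) (fun a => ∑ s : Fin T, D s * μ s a)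
  have hmax : ∀ s, (univ : Finset (Fin K)).sup' (univ_ne hK) (fun a => μ s a)
      ≤ M + ρ * Psi D s := fun s =>
    Finset.sup'_le _ _ fun a _ =>
      (le_sum_mul_add_mul_Psi hD0 hD1 (hslow.abs_sub_le a) s).trans
        (by gcongr; exact Finset.le_sup' (fun a => ∑ t, D t * μ t a) (mem_univ a))
  calc _ ≤ ∑ s, D s * (M + ρ * Psi D s) := by gcongr with s; exacts [hD0 s, hmax s]
    _ = M + ρ * PhiD D := by
        rw [← sum_mul_Psi, Finset.mul_sum]
        simp only [mul_add, Finset.sum_add_distrib, ← Finset.sum_mul, hD1, one_mul, mul_left_comm]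

/-- For a ρ-slowly-moving reward-mean sequence μ and temporal belief D:
E_{s∼D}[max_a μ_{s,a}] ≤ max_a E_{s∼D}[μ_{s,a}] + ρ·Φ(D). -/
theorem stmt6 {T K : ℕ} (hK : 2 ≤ K) (ρ : ℝ)
    (μ : Fin T → Fin K → ℝ) (hμ : ∀ t a, μ t a ∈ Set.Icc (0 : ℝ) 1)
    (hslow : SlowlyMoving μ ρ)
    (D : Fin T → ℝ) (hD0 : ∀ t, 0 ≤ D t) (hD1 : ∑ t, D t = 1) :
    ∑ s : Fin T, D s * ((univ : Finset (Fin K)).sup' (univ_ne hK) (fun a => μ s a))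
      ≤ (univ : Finset (Fin K)).sup' (univ_ne hK) (fun a => ∑ s : Fin T, D s * μ s a)
        + ρ * PhiD D :=
  stmt6_general hK ρ μ hslow D hD0 hD1
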